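/- arXiv:1509.05306 — 6 statements merged into one kernel-verified Lean document; each statement's English description precedes it below -/
import Mathlib

section
/- Let 0 < a ≤ b be real numbers and let A and B be Hermitian k×k complex matrices with a·I ≤ A ≤ b·I and a·I ≤ B ≤ b·I (so A and B are positive definite and invertible). Then A ⊗ B⁻¹ + A⁻¹ ⊗ B ≤ ((a² + b²)/(a·b))·I, where I on the right-hand side denotes the k²×k² identity matrix. -/
open Matrix MeasureTheory
open scoped Kronecker ComplexOrder

attribute [local instance] Matrix.frobeniusNormedAddCommGroup Matrix.frobeniusNormedSpace

/-- Symmetrized Kronecker tensor product: `X ⊗ₛ Y = (1/2)(X ⊗ Y + Y ⊗ X)`. -/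
noncomputable def symKron {k : ℕ} (X Y : Matrix (Fin k) (Fin k) ℂ) :
    Matrix (Fin k × Fin k) (Fin k × Fin k) ℂ :=
  ((1 : ℂ) / 2) • (X ⊗ₖ Y + Y ⊗ₖ X)

/-!
Diagonalise `A = U diag(λ) U*` and `B = V diag(μ) V*`. The unitary `U ⊗ V` then diagonalises
`A ⊗ B⁻¹` and `A⁻¹ ⊗ B` simultaneously, so `A ⊗ B⁻¹ + A⁻¹ ⊗ B` has eigenvalues
`λᵢ / μⱼ + μⱼ / λᵢ`. The Loewner bounds place every `λᵢ` and `μⱼ` in `[a, b]`, and the claim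
reduces to the scalar inequality `x / y + y / x ≤ (a² + b²) / (a b)` for `x, y ∈ [a, b]`.
-/

lemma div_add_div_le_sq_add_sq_div_mul {a b x y : ℝ} (ha : 0 < a) (hx : x ∈ Set.Icc a b)
    (hy : y ∈ Set.Icc a b) : x / y + y / x ≤ (a ^ 2 + b ^ 2) / (a * b) := by
  obtain ⟨hax, hxb⟩ := hx
  obtain ⟨hay, hyb⟩ := hy
  have hb : 0 < b := ha.trans_le (hax.trans hxb)
  have hx0 : 0 < x := ha.trans_le hax
  have hy0 : 0 < y := ha.trans_le hay
  have hbx_ay : 0 ≤ b * x - a * y := by nlinarith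
  have hby_ax : 0 ≤ b * y - a * x := by nlinarith
  rw [div_add_div _ _ hy0.ne' hx0.ne', div_le_div_iff₀ (by positivity) (by positivity)]
  -- `(a² + b²) x y - a b (x² + y²) = (b x - a y) (b y - a x)`
  nlinarith [mul_nonneg hbx_ay hby_ax]

namespace Matrix

open Unitary

variable {𝕜 m n : Type*} [RCLike 𝕜] [Fintype m] [Fintype n] [DecidableEq m] [DecidableEq n]

lemma conjStarAlgAut_smul_one (u : unitary (Matrix n n 𝕜)) (c : ℝ) :
    conjStarAlgAut 𝕜 _ u (c • 1) = c • 1 := by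
  rw [conjStarAlgAut_apply, mul_smul_comm, mul_one, smul_mul_assoc, mul_star_self_of_mem u.2]

lemma posSemidef_conjStarAlgAut_diagonal_sub_smul_one_iff (u : unitary (Matrix n n 𝕜))
    (d : n → ℝ) (c : ℝ) :
    (conjStarAlgAut 𝕜 _ u (diagonal (RCLike.ofReal ∘ d)) - c • 1).PosSemidef ↔ ∀ i, c ≤ d i := by
  rw [← conjStarAlgAut_smul_one u c, ← map_sub, conjStarAlgAut_apply,
    isUnit_coe.posSemidef_star_right_conjugate_iff, RCLike.real_smul_eq_coe_smul (K := 𝕜),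
    smul_one_eq_diagonal, diagonal_sub, posSemidef_diagonal_iff]
  simp only [Function.comp_apply, ← RCLike.ofReal_sub, RCLike.ofReal_nonneg, sub_nonneg]

lemma posSemidef_smul_one_sub_conjStarAlgAut_diagonal_iff (u : unitary (Matrix n n 𝕜))
    (d : n → ℝ) (c : ℝ) :
    (c • 1 - conjStarAlgAut 𝕜 _ u (diagonal (RCLike.ofReal ∘ d))).PosSemidef ↔ ∀ i, d i ≤ c := by
  rw [← conjStarAlgAut_smul_one u c, ← map_sub, conjStarAlgAut_apply,
    isUnit_coe.posSemidef_star_right_conjugate_iff, RCLike.real_smul_eq_coe_smul (K := 𝕜),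
    smul_one_eq_diagonal, diagonal_sub, posSemidef_diagonal_iff]
  simp only [Function.comp_apply, ← RCLike.ofReal_sub, RCLike.ofReal_nonneg, sub_nonneg]

lemma IsHermitian.posSemidef_sub_smul_one_iff {A : Matrix n n 𝕜} (hA : A.IsHermitian) (c : ℝ) :
    (A - c • 1).PosSemidef ↔ ∀ i, c ≤ hA.eigenvalues i := by
  conv_lhs => rw [hA.spectral_theorem]
  exact posSemidef_conjStarAlgAut_diagonal_sub_smul_one_iff _ _ c

lemma IsHermitian.posSemidef_smul_one_sub_iff {A : Matrix n n 𝕜} (hA : A.IsHermitian) (c : ℝ) :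
    (c • 1 - A).PosSemidef ↔ ∀ i, hA.eigenvalues i ≤ c := by
  conv_lhs => rw [hA.spectral_theorem]
  exact posSemidef_smul_one_sub_conjStarAlgAut_diagonal_iff _ _ c

lemma inv_conjStarAlgAut_diagonal (u : unitary (Matrix n n 𝕜)) {d : n → ℝ} (hd : ∀ i, d i ≠ 0) :
    (conjStarAlgAut 𝕜 _ u (diagonal (RCLike.ofReal ∘ d)))⁻¹ =
      conjStarAlgAut 𝕜 _ u (diagonal (RCLike.ofReal ∘ d⁻¹)) := by
  refine inv_eq_left_inv ?_
  rw [← map_mul, diagonal_mul_diagonal]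
  simp [hd]

def kroneckerUnitary (u : unitary (Matrix m m 𝕜)) (v : unitary (Matrix n n 𝕜)) :
    unitary (Matrix (m × n) (m × n) 𝕜) :=
  ⟨u ⊗ₖ v, kronecker_mem_unitary u.2 v.2⟩

lemma conjStarAlgAut_kronecker (u : unitary (Matrix m m 𝕜)) (v : unitary (Matrix n n 𝕜))
    (X : Matrix m m 𝕜) (Y : Matrix n n 𝕜) :
    conjStarAlgAut 𝕜 (Matrix m m 𝕜) u X ⊗ₖ conjStarAlgAut 𝕜 (Matrix n n 𝕜) v Y =
      conjStarAlgAut 𝕜 (Matrix (m × n) (m × n) 𝕜) (kroneckerUnitary u v) (X ⊗ₖ Y) := by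
  simp only [conjStarAlgAut_apply, mul_kronecker_mul, kroneckerUnitary, star_eq_conjTranspose,
    conjTranspose_kronecker]

lemma conjStarAlgAut_diagonal_kronecker_inv_add_inv_kronecker (u : unitary (Matrix m m 𝕜))
    (v : unitary (Matrix n n 𝕜)) {d : m → ℝ} {e : n → ℝ} (hd : ∀ i, d i ≠ 0) (he : ∀ j, e j ≠ 0) :
    conjStarAlgAut 𝕜 _ u (diagonal (RCLike.ofReal ∘ d)) ⊗ₖ
        (conjStarAlgAut 𝕜 _ v (diagonal (RCLike.ofReal ∘ e)))⁻¹ +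
      (conjStarAlgAut 𝕜 _ u (diagonal (RCLike.ofReal ∘ d)))⁻¹ ⊗ₖ
        conjStarAlgAut 𝕜 _ v (diagonal (RCLike.ofReal ∘ e)) =
      conjStarAlgAut 𝕜 (Matrix (m × n) (m × n) 𝕜) (kroneckerUnitary u v)
        (diagonal (RCLike.ofReal ∘ fun p ↦ d p.1 / e p.2 + e p.2 / d p.1)) := by
  rw [inv_conjStarAlgAut_diagonal u hd, inv_conjStarAlgAut_diagonal v he, conjStarAlgAut_kronecker,
    conjStarAlgAut_kronecker, ← map_add, diagonal_kronecker_diagonal, diagonal_kronecker_diagonal,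
    diagonal_add]
  congr 2
  funext p
  simp only [Function.comp_apply, Pi.inv_apply]
  push_cast
  ring

end Matrix

theorem kron_kantorovich_bound_general {k : ℕ} (a b : ℝ) (ha : 0 < a)
    (A B : Matrix (Fin k) (Fin k) ℂ) (hA : A.IsHermitian) (hB : B.IsHermitian)
    (hAa : (A - a • 1).PosSemidef) (hAb : ((b • 1 : Matrix (Fin k) (Fin k) ℂ) - A).PosSemidef)
    (hBa : (B - a • 1).PosSemidef) (hBb : ((b • 1 : Matrix (Fin k) (Fin k) ℂ) - B).PosSemidef) :
    (((a ^ 2 + b ^ 2) / (a * b)) • (1 : Matrix (Fin k × Fin k) (Fin k × Fin k) ℂ)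
      - (A ⊗ₖ B⁻¹ + A⁻¹ ⊗ₖ B)).PosSemidef := by
  have hAeig : ∀ i, hA.eigenvalues i ∈ Set.Icc a b := fun i ↦
    ⟨(hA.posSemidef_sub_smul_one_iff a).1 hAa i, (hA.posSemidef_smul_one_sub_iff b).1 hAb i⟩
  have hBeig : ∀ j, hB.eigenvalues j ∈ Set.Icc a b := fun j ↦
    ⟨(hB.posSemidef_sub_smul_one_iff a).1 hBa j, (hB.posSemidef_smul_one_sub_iff b).1 hBb j⟩
  rw [hA.spectral_theorem, hB.spectral_theorem,
    conjStarAlgAut_diagonal_kronecker_inv_add_inv_kronecker _ _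
      (fun i ↦ (ha.trans_le (hAeig i).1).ne') (fun j ↦ (ha.trans_le (hBeig j).1).ne'),
    posSemidef_smul_one_sub_conjStarAlgAut_diagonal_iff]
  exact fun p ↦ div_add_div_le_sq_add_sq_div_mul ha (hAeig p.1) (hBeig p.2)

/-- Lemma 3.1 (inequality part): if `A, B` are Hermitian with `a·I ≤ A, B ≤ b·I` where
`0 < a ≤ b`, then `A ⊗ B⁻¹ + A⁻¹ ⊗ B ≤ ((a² + b²)/(ab))·I`. -/
theorem kron_kantorovich_bound {k : ℕ} (a b : ℝ) (ha : 0 < a) (hab : a ≤ b)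
    (A B : Matrix (Fin k) (Fin k) ℂ) (hA : A.IsHermitian) (hB : B.IsHermitian)
    (hAa : (A - a • 1).PosSemidef) (hAb : ((b • 1 : Matrix (Fin k) (Fin k) ℂ) - A).PosSemidef)
    (hBa : (B - a • 1).PosSemidef) (hBb : ((b • 1 : Matrix (Fin k) (Fin k) ℂ) - B).PosSemidef) :
    (((a ^ 2 + b ^ 2) / (a * b)) • (1 : Matrix (Fin k × Fin k) (Fin k × Fin k) ℂ)
      - (A ⊗ₖ B⁻¹ + A⁻¹ ⊗ₖ B)).PosSemidef :=
  kron_kantorovich_bound_general a b ha A B hA hB hAa hAb hBa hBb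
end

section
/- Let 0 < a ≤ b be real numbers. For each i = 1, 2, …, n, let A_i be a Hermitian k×k complex matrix with a·I ≤ A_i ≤ b·I and let W_i be a positive semidefinite k×k complex matrix. Then (∑_{i=1}^n W_i^{1/2} A_i W_i^{1/2}) ⊗_s (∑_{i=1}^n W_i^{1/2} A_i⁻¹ W_i^{1/2}) ≤ ((a² + b²)/(2ab)) · (∑_{i=1}^n W_i)^{⊗2}. -/
open Matrix MeasureTheory
open scoped Kronecker ComplexOrder

attribute [local instance] Matrix.frobeniusNormedAddCommGroup Matrix.frobeniusNormedSpace

/-- The positive semidefinite square root, as `Matrix.PosSemidef.sqrt` was defined in older Mathlib. -/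
noncomputable def Matrix.PosSemidef.sqrt {n 𝕜 : Type*} [Fintype n] [DecidableEq n] [RCLike 𝕜]
    {A : Matrix n n 𝕜} (hA : A.PosSemidef) : Matrix n n 𝕜 :=
  (hA.1.eigenvectorUnitary : Matrix n n 𝕜) *
    diagonal (fun i => ((Real.sqrt (hA.1.eigenvalues i) : ℝ) : 𝕜)) *
    (star hA.1.eigenvectorUnitary : Matrix n n 𝕜)

/-!
For each pair `(i, j)` the matrix `C = Aᵢ ⊗ Aⱼ⁻¹` is Hermitian with spectrum in `[a/b, b/a]`, and
`C⁻¹ = Aᵢ⁻¹ ⊗ Aⱼ`. For `0 < r ≤ x ≤ s` one has `x + rs/x ≤ r + s`, since `(x - r)(s - x) ≥ 0`;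
with `r = a/b`, `s = b/a` the functional calculus turns this into
`Aᵢ ⊗ Aⱼ⁻¹ + Aᵢ⁻¹ ⊗ Aⱼ ≤ (a² + b²)/(ab)`. Conjugating by `Wᵢ^{1/2} ⊗ Wⱼ^{1/2}`, summing over `i, j`
and halving gives the inequality.
-/

open scoped Ring MatrixOrder

lemma Matrix.PosSemidef.sqrt_eq_cfc_sqrt {n 𝕜 : Type*} [Fintype n] [DecidableEq n] [RCLike 𝕜]
    {A : Matrix n n 𝕜} (hA : A.PosSemidef) : hA.sqrt = CFC.sqrt A := by
  rw [CFC.sqrt_eq_real_sqrt A hA.nonneg, cfcₙ_eq_cfc, hA.1.cfc_eq, IsHermitian.cfc,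
    Unitary.conjStarAlgAut_apply]
  rfl

lemma IsSelfAdjoint.of_algebraMap_le {A : Type*} [Ring A] [StarRing A] [Algebra ℝ A]
    [StarModule ℝ A] [PartialOrder A] [StarOrderedRing A] {c : A} {r : ℝ}
    (hrc : algebraMap ℝ A r ≤ c) : IsSelfAdjoint c := by
  simpa using (IsSelfAdjoint.of_nonneg (sub_nonneg.2 hrc)).add (.algebraMap A (.all r))

section ContinuousFunctionalCalculus

variable {A : Type*} [Ring A] [StarRing A] [Algebra ℝ A] [TopologicalSpace A] [PartialOrder A]
  [StarOrderedRing A] [ContinuousFunctionalCalculus ℝ A IsSelfAdjoint] [NonnegSpectrumClass ℝ A]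
  {c : A} {r s : ℝ}

lemma spectrum_subset_Icc_of_algebraMap_le (hc : IsSelfAdjoint c)
    (hrc : algebraMap ℝ A r ≤ c) (hcs : c ≤ algebraMap ℝ A s) : spectrum ℝ c ⊆ Set.Icc r s :=
  fun x hx => ⟨(algebraMap_le_iff_le_spectrum hc).1 hrc x hx,
    (le_algebraMap_iff_spectrum_le hc).1 hcs x hx⟩

lemma isUnit_of_algebraMap_le (hr : 0 < r) (hc : IsSelfAdjoint c)
    (hrc : algebraMap ℝ A r ≤ c) : IsUnit c :=
  spectrum.isUnit_of_zero_notMem ℝ fun h0 =>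
    ((algebraMap_le_iff_le_spectrum hc).1 hrc 0 h0).not_gt hr

lemma algebraMap_inv_le_ringInverse (hc : IsSelfAdjoint c) (hrc : algebraMap ℝ A r ≤ c)
    (hcs : c ≤ algebraMap ℝ A s) (hr : 0 < r) : algebraMap ℝ A s⁻¹ ≤ c⁻¹ʳ := by
  have hspec := spectrum_subset_Icc_of_algebraMap_le hc hrc hcs
  have hcont : ContinuousOn (fun x : ℝ => x⁻¹) (spectrum ℝ c) :=
    continuousOn_inv₀.mono fun x hx => (hr.trans_le (hspec hx).1).ne'
  rw [← cfc_ringInverse_id (R := ℝ) c (isUnit_of_algebraMap_le hr hc hrc)]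
  exact algebraMap_le_cfc _ _ _ fun x hx => inv_anti₀ (hr.trans_le (hspec hx).1) (hspec hx).2

lemma ringInverse_le_algebraMap_inv (hc : IsSelfAdjoint c) (hrc : algebraMap ℝ A r ≤ c)
    (hr : 0 < r) : c⁻¹ʳ ≤ algebraMap ℝ A r⁻¹ := by
  have hspec := (algebraMap_le_iff_le_spectrum hc).1 hrc
  have hcont : ContinuousOn (fun x : ℝ => x⁻¹) (spectrum ℝ c) :=
    continuousOn_inv₀.mono fun x hx => (hr.trans_le (hspec x hx)).ne'
  rw [← cfc_ringInverse_id (R := ℝ) c (isUnit_of_algebraMap_le hr hc hrc)]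
  exact cfc_le_algebraMap _ _ _ fun x hx => inv_anti₀ hr (hspec x hx)

lemma add_smul_ringInverse_le (hc : IsSelfAdjoint c) (hrc : algebraMap ℝ A r ≤ c)
    (hcs : c ≤ algebraMap ℝ A s) (hr : 0 < r) :
    c + (r * s) • c⁻¹ʳ ≤ algebraMap ℝ A (r + s) := by
  have hspec := spectrum_subset_Icc_of_algebraMap_le hc hrc hcs
  have hcont : ContinuousOn (fun x : ℝ => x⁻¹) (spectrum ℝ c) :=
    continuousOn_inv₀.mono fun x hx => (hr.trans_le (hspec hx).1).ne'
  have hcfc : c + (r * s) • c⁻¹ʳ = cfc (fun x => x + r * s * x⁻¹) c := by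
    rw [cfc_add .., cfc_id' .., cfc_const_mul ..,
      cfc_ringInverse_id c (isUnit_of_algebraMap_le hr hc hrc)]
  rw [hcfc]
  refine cfc_le_algebraMap _ _ _ fun x hx => ?_
  obtain ⟨hrx, hxs⟩ := hspec hx
  have hx : 0 < x := hr.trans_le hrx
  have key : r + s - (x + r * s * x⁻¹) = (x - r) * (s - x) / x := by field_simp; ring
  exact sub_nonneg.1 (key ▸ div_nonneg (mul_nonneg (by linarith) (by linarith)) hx.le)

end ContinuousFunctionalCalculus

namespace Matrix

lemma sum_kronecker_sum {α ι κ l m n p : Type*} [NonUnitalNonAssocSemiring α]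
    (s : Finset ι) (t : Finset κ) (F : ι → Matrix l m α) (G : κ → Matrix n p α) :
    (∑ i ∈ s, F i) ⊗ₖ (∑ j ∈ t, G j) = ∑ i ∈ s, ∑ j ∈ t, F i ⊗ₖ G j := by
  ext
  simp only [kroneckerMap_apply, sum_apply, Finset.sum_mul_sum]

variable {𝕜 m n : Type*} [RCLike 𝕜] [Fintype m] [Fintype n]

lemma kronecker_le_kronecker {X X' : Matrix m m 𝕜} {Y Y' : Matrix n n 𝕜}
    (hX' : 0 ≤ X') (hX : X' ≤ X) (hY' : 0 ≤ Y') (hY : Y' ≤ Y) : X' ⊗ₖ Y' ≤ X ⊗ₖ Y := by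
  have hsplit : X ⊗ₖ Y - X' ⊗ₖ Y' = (X - X') ⊗ₖ Y + X' ⊗ₖ (Y - Y') := by
    ext; simp only [sub_apply, add_apply, kroneckerMap_apply]; ring
  rw [le_iff, hsplit]
  exact ((le_iff.1 hX).kronecker (hY'.trans hY).posSemidef).add
    (hX'.posSemidef.kronecker (le_iff.1 hY))

variable [DecidableEq m] [DecidableEq n]

lemma algebraMap_kronecker_algebraMap (r t : ℝ) :
    algebraMap ℝ (Matrix m m 𝕜) r ⊗ₖ algebraMap ℝ (Matrix n n 𝕜) t =
      algebraMap ℝ (Matrix (m × n) (m × n) 𝕜) (r * t) := by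
  simp only [Algebra.algebraMap_eq_smul_one]
  rw [smul_kronecker, kronecker_smul, one_kronecker_one, smul_smul]

lemma algebraMap_nonneg_of_nonneg {r : ℝ} (hr : 0 ≤ r) :
    0 ≤ algebraMap ℝ (Matrix m m 𝕜) r := by
  rw [Algebra.algebraMap_eq_smul_one]
  exact (PosSemidef.one.smul hr).nonneg

lemma kronecker_inv_add_inv_kronecker_le {a b : ℝ} (ha : 0 < a) (hab : a ≤ b)
    {A : Matrix m m 𝕜} {B : Matrix n n 𝕜}
    (hAa : algebraMap ℝ _ a ≤ A) (hAb : A ≤ algebraMap ℝ _ b)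
    (hBa : algebraMap ℝ _ a ≤ B) (hBb : B ≤ algebraMap ℝ _ b) :
    A ⊗ₖ B⁻¹ + A⁻¹ ⊗ₖ B ≤ algebraMap ℝ _ ((a ^ 2 + b ^ 2) / (a * b)) := by
  have hb : 0 < b := ha.trans_le hab
  have hB := IsSelfAdjoint.of_algebraMap_le hBa
  have hBinv_lo : algebraMap ℝ _ b⁻¹ ≤ B⁻¹ :=
    nonsing_inv_eq_ringInverse B ▸ algebraMap_inv_le_ringInverse hB hBa hBb ha
  have hBinv_hi : B⁻¹ ≤ algebraMap ℝ _ a⁻¹ :=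
    nonsing_inv_eq_ringInverse B ▸ ringInverse_le_algebraMap_inv hB hBa ha
  have hC_lo : algebraMap ℝ _ (a / b) ≤ A ⊗ₖ B⁻¹ := by
    rw [div_eq_mul_inv, ← algebraMap_kronecker_algebraMap]
    exact kronecker_le_kronecker (algebraMap_nonneg_of_nonneg ha.le) hAa
      (algebraMap_nonneg_of_nonneg (inv_nonneg.2 hb.le)) hBinv_lo
  have hC_hi : A ⊗ₖ B⁻¹ ≤ algebraMap ℝ _ (b / a) := by
    rw [div_eq_mul_inv, ← algebraMap_kronecker_algebraMap]
    exact kronecker_le_kronecker ((algebraMap_nonneg_of_nonneg ha.le).trans hAa) hAb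
      ((algebraMap_nonneg_of_nonneg (inv_nonneg.2 hb.le)).trans hBinv_lo) hBinv_hi
  have hC_inv : (A ⊗ₖ B⁻¹)⁻¹ʳ = A⁻¹ ⊗ₖ B := by
    rw [← nonsing_inv_eq_ringInverse, inv_kronecker, nonsing_inv_nonsing_inv]
    exact (isUnit_iff_isUnit_det B).1 (isUnit_of_algebraMap_le ha hB hBa)
  have key := add_smul_ringInverse_le (IsSelfAdjoint.of_algebraMap_le hC_lo) hC_lo hC_hi
    (div_pos ha hb)
  have hprod : a / b * (b / a) = 1 := by field_simp
  have hsum : a / b + b / a = (a ^ 2 + b ^ 2) / (a * b) := by field_simp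
  rwa [hC_inv, hprod, one_smul, hsum] at key

lemma conj_kronecker_inv_add_inv_kronecker_le {a b : ℝ} (ha : 0 < a) (hab : a ≤ b)
    {A : Matrix m m 𝕜} {B : Matrix n n 𝕜}
    (hAa : algebraMap ℝ _ a ≤ A) (hAb : A ≤ algebraMap ℝ _ b)
    (hBa : algebraMap ℝ _ a ≤ B) (hBb : B ≤ algebraMap ℝ _ b)
    {S : Matrix m m 𝕜} {T : Matrix n n 𝕜} (hS : IsSelfAdjoint S) (hT : IsSelfAdjoint T) :
    (S * A * S) ⊗ₖ (T * B⁻¹ * T) + (S * A⁻¹ * S) ⊗ₖ (T * B * T) ≤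
      ((a ^ 2 + b ^ 2) / (a * b)) • ((S * S) ⊗ₖ (T * T)) := by
  have hST : star (S ⊗ₖ T) = S ⊗ₖ T :=
    (conjTranspose_kronecker S T).trans (congrArg₂ (· ⊗ₖ ·) hS hT)
  have h := star_left_conjugate_le_conjugate
    (kronecker_inv_add_inv_kronecker_le ha hab hAa hAb hBa hBb) (S ⊗ₖ T)
  simpa only [hST, mul_add, add_mul, mul_kronecker_mul, Algebra.algebraMap_eq_smul_one,
    mul_smul_comm, smul_mul_assoc, mul_one] using h

end Matrix

theorem kantorovich_sum_tensor_general {k n : ℕ} (a b : ℝ) (ha : 0 < a) (hab : a ≤ b)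
    (A W : Fin n → Matrix (Fin k) (Fin k) ℂ)
    (hAa : ∀ i, (A i - a • 1).PosSemidef)
    (hAb : ∀ i, ((b • 1 : Matrix (Fin k) (Fin k) ℂ) - A i).PosSemidef)
    (hW : ∀ i, (W i).PosSemidef) :
    (((a ^ 2 + b ^ 2) / (2 * a * b)) • ((∑ i, W i) ⊗ₖ (∑ i, W i))
      - symKron (∑ i, (hW i).sqrt * A i * (hW i).sqrt)
          (∑ i, (hW i).sqrt * (A i)⁻¹ * (hW i).sqrt)).PosSemidef := by
  have hAa' i : algebraMap ℝ (Matrix (Fin k) (Fin k) ℂ) a ≤ A i := by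
    rw [Algebra.algebraMap_eq_smul_one]; exact hAa i
  have hAb' i : A i ≤ algebraMap ℝ (Matrix (Fin k) (Fin k) ℂ) b := by
    rw [Algebra.algebraMap_eq_smul_one]; exact hAb i
  have hsum : (∑ i, CFC.sqrt (W i) * A i * CFC.sqrt (W i)) ⊗ₖ
        (∑ i, CFC.sqrt (W i) * (A i)⁻¹ * CFC.sqrt (W i)) +
      (∑ i, CFC.sqrt (W i) * (A i)⁻¹ * CFC.sqrt (W i)) ⊗ₖ
        (∑ i, CFC.sqrt (W i) * A i * CFC.sqrt (W i)) ≤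
      ((a ^ 2 + b ^ 2) / (a * b)) • ((∑ i, W i) ⊗ₖ (∑ i, W i)) := by
    simp only [sum_kronecker_sum, ← Finset.sum_add_distrib, Finset.smul_sum]
    refine Finset.sum_le_sum fun i _ => Finset.sum_le_sum fun j _ => ?_
    simpa only [CFC.sqrt_mul_sqrt_self _ (hW _).nonneg] using
      conj_kronecker_inv_add_inv_kronecker_le ha hab (hAa' i) (hAb' i) (hAa' j) (hAb' j)
        (CFC.sqrt_nonneg (W i)).isSelfAdjoint (CFC.sqrt_nonneg (W j)).isSelfAdjoint
  simp only [PosSemidef.sqrt_eq_cfc_sqrt]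
  show symKron _ _ ≤ _
  rw [le_iff]
  convert (le_iff.1 hsum).smul (by norm_num : (0 : ℝ) ≤ 1 / 2) using 1
  unfold symKron
  module

/-- Corollary 3.3: discrete Kantorovich type inequality for the symmetrized tensor product. -/
theorem kantorovich_sum_tensor {k n : ℕ} (a b : ℝ) (ha : 0 < a) (hab : a ≤ b)
    (A W : Fin n → Matrix (Fin k) (Fin k) ℂ)
    (hAherm : ∀ i, (A i).IsHermitian)
    (hAa : ∀ i, (A i - a • 1).PosSemidef)
    (hAb : ∀ i, ((b • 1 : Matrix (Fin k) (Fin k) ℂ) - A i).PosSemidef)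
    (hW : ∀ i, (W i).PosSemidef) :
    (((a ^ 2 + b ^ 2) / (2 * a * b)) • ((∑ i, W i) ⊗ₖ (∑ i, W i))
      - symKron (∑ i, (hW i).sqrt * A i * (hW i).sqrt)
          (∑ i, (hW i).sqrt * (A i)⁻¹ * (hW i).sqrt)).PosSemidef :=
  kantorovich_sum_tensor_general a b ha hab A W hAa hAb hW
end

section
/- Let f : [0, ∞) → [0, ∞) be a continuous operator monotone and super-multiplicative function. Then for all positive definite k×k complex matrices A, B, C, D, one has (A σ_f C) ⊗ (B σ_f D) ≤ (A ⊗ B) σ_f (C ⊗ D). -/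
open Matrix MeasureTheory
open scoped Kronecker ComplexOrder

attribute [local instance] Matrix.frobeniusNormedAddCommGroup Matrix.frobeniusNormedSpace

/-- The operator connection with representing function `f`:
`X σ_f Y = X^{1/2} f(X^{-1/2} Y X^{-1/2}) X^{1/2}`, where square roots and `f` are taken
via the continuous functional calculus for Hermitian matrices. -/
noncomputable def opConn {m : Type*} [Fintype m] [DecidableEq m] (f : ℝ → ℝ)
    (X Y : Matrix m m ℂ) : Matrix m m ℂ :=
  cfc Real.sqrt X * cfc f ((cfc Real.sqrt X)⁻¹ * Y * (cfc Real.sqrt X)⁻¹) * cfc Real.sqrt X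

/-!
Put `S = A^{1/2}`, `T = B^{1/2}`, `C' = S⁻¹ C S⁻¹`, `D' = T⁻¹ D T⁻¹`. The square root is
multiplicative on Kronecker products of positive matrices, so the two sides are the congruences by
`S ⊗ T` of `f(C' ⊗ D')` and of `f(C') ⊗ f(D')`. Diagonalising `C' = U diag(a) U*` and
`D' = V diag(b) V*` gives `C' ⊗ D' = (U ⊗ V) diag(aᵢ bⱼ) (U ⊗ V)*`, hence
`f(C' ⊗ D') - f(C') ⊗ f(D') = (U ⊗ V) diag(f(aᵢ bⱼ) - f(aᵢ) f(bⱼ)) (U ⊗ V)*`, which is positive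
semidefinite by super-multiplicativity because the eigenvalues `aᵢ, bⱼ` are nonnegative.
-/

namespace Matrix

variable {n m 𝕜 : Type*} [Fintype n] [DecidableEq n] [Fintype m] [DecidableEq m] [RCLike 𝕜]

lemma diagonal_comp_mul_eq_mul_diagonal_comp {T : Matrix n m 𝕜} {a : n → ℝ} {b : m → ℝ}
    (g : ℝ → ℝ)
    (h : diagonal (RCLike.ofReal ∘ a : n → 𝕜) * T = T * diagonal (RCLike.ofReal ∘ b : m → 𝕜)) :
    diagonal (RCLike.ofReal ∘ g ∘ a : n → 𝕜) * T
      = T * diagonal (RCLike.ofReal ∘ g ∘ b : m → 𝕜) := by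
  refine Matrix.ext fun i j => ?_
  have hij := congrArg (fun X : Matrix n m 𝕜 => X i j) h
  simp only [diagonal_mul, mul_diagonal, Function.comp_apply] at hij ⊢
  by_cases hT : T i j = 0
  · simp [hT]
  · have hab : a i = b j :=
      RCLike.ofReal_injective (mul_right_cancel₀ hT (hij.trans (mul_comm _ _)))
    rw [hab, mul_comm]

lemma cfc_conj_diagonal (f : ℝ → ℝ) {U : Matrix n n 𝕜} (hU : U ∈ unitary (Matrix n n 𝕜))
    (d : n → ℝ) :
    cfc f (U * diagonal (RCLike.ofReal ∘ d : n → 𝕜) * star U)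
      = U * diagonal (RCLike.ofReal ∘ f ∘ d : n → 𝕜) * star U := by
  set M := U * diagonal (RCLike.ofReal ∘ d : n → 𝕜) * star U
  have hM : M.IsHermitian := by
    simp [M, IsHermitian, conjTranspose_mul, star_eq_conjTranspose, mul_assoc,
      diagonal_conjTranspose, Function.comp_def, Pi.star_def, RCLike.star_def]
  -- `cfc f M` is computed in Mathlib's own eigenbasis `W` of `M`. The matrix `star W * U`
  -- intertwines the two diagonal forms, so it only links equal eigenvalues.
  set W : Matrix n n 𝕜 := ↑hM.eigenvectorUnitary
  have hW : W ∈ unitary (Matrix n n 𝕜) := SetLike.coe_mem _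
  have hT : diagonal (RCLike.ofReal ∘ hM.eigenvalues : n → 𝕜) * (star W * U)
      = (star W * U) * diagonal (RCLike.ofReal ∘ d : n → 𝕜) := by
    have hMW : M = W * diagonal (RCLike.ofReal ∘ hM.eigenvalues) * star W := hM.spectral_theorem
    calc _ = star W * (W * diagonal (RCLike.ofReal ∘ hM.eigenvalues) * star W) * U := by
          simp only [← mul_assoc, Unitary.star_mul_self_of_mem hW, one_mul]
      _ = (star W * U) * diagonal (RCLike.ofReal ∘ d : n → 𝕜) := by
          rw [← hMW]
          simp only [M, mul_assoc, Unitary.star_mul_self_of_mem hU, mul_one]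
  rw [hM.cfc_eq, IsHermitian.cfc, Unitary.conjStarAlgAut_apply]
  calc W * diagonal (RCLike.ofReal ∘ f ∘ hM.eigenvalues) * star W
      = W * (diagonal (RCLike.ofReal ∘ f ∘ hM.eigenvalues) * (star W * U)) * star U := by
        simp only [mul_assoc, Unitary.mul_star_self_of_mem hU, mul_one]
    _ = U * diagonal (RCLike.ofReal ∘ f ∘ d : n → 𝕜) * star U := by
        rw [diagonal_comp_mul_eq_mul_diagonal_comp f hT]
        simp only [← mul_assoc, Unitary.mul_star_self_of_mem hW, one_mul]

lemma conj_diagonal_kronecker_conj_diagonal (U : Matrix n n 𝕜) (V : Matrix m m 𝕜) (a : n → ℝ)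
    (b : m → ℝ) :
    (U * diagonal (RCLike.ofReal ∘ a : n → 𝕜) * star U)
        ⊗ₖ (V * diagonal (RCLike.ofReal ∘ b : m → 𝕜) * star V)
      = (U ⊗ₖ V) * diagonal (RCLike.ofReal ∘ fun p : n × m => a p.1 * b p.2 : n × m → 𝕜)
          * star (U ⊗ₖ V) := by
  rw [mul_kronecker_mul, mul_kronecker_mul, diagonal_kronecker_diagonal, star_eq_conjTranspose,
    star_eq_conjTranspose, star_eq_conjTranspose, conjTranspose_kronecker]
  congr 3
  funext p
  simp

section Hermitian

variable {X : Matrix n n 𝕜} {Y : Matrix m m 𝕜}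

lemma IsHermitian.cfc_kronecker (hX : X.IsHermitian) (hY : Y.IsHermitian) (f : ℝ → ℝ) :
    cfc f (X ⊗ₖ Y) = ((hX.eigenvectorUnitary : Matrix n n 𝕜) ⊗ₖ hY.eigenvectorUnitary)
      * diagonal (RCLike.ofReal ∘ fun p : n × m => f (hX.eigenvalues p.1 * hY.eigenvalues p.2)
          : n × m → 𝕜)
      * star ((hX.eigenvectorUnitary : Matrix n n 𝕜) ⊗ₖ hY.eigenvectorUnitary) := by
  conv_lhs => rw [hX.spectral_theorem, hY.spectral_theorem, Unitary.conjStarAlgAut_apply,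
    Unitary.conjStarAlgAut_apply, conj_diagonal_kronecker_conj_diagonal]
  exact cfc_conj_diagonal f
    (kronecker_mem_unitary (SetLike.coe_mem _) (SetLike.coe_mem _)) _

lemma IsHermitian.cfc_kronecker_cfc (hX : X.IsHermitian) (hY : Y.IsHermitian) (f g : ℝ → ℝ) :
    cfc f X ⊗ₖ cfc g Y = ((hX.eigenvectorUnitary : Matrix n n 𝕜) ⊗ₖ hY.eigenvectorUnitary)
      * diagonal (RCLike.ofReal ∘ fun p : n × m => f (hX.eigenvalues p.1) * g (hY.eigenvalues p.2)
          : n × m → 𝕜)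
      * star ((hX.eigenvectorUnitary : Matrix n n 𝕜) ⊗ₖ hY.eigenvectorUnitary) := by
  rw [hX.cfc_eq, hY.cfc_eq, IsHermitian.cfc, IsHermitian.cfc, Unitary.conjStarAlgAut_apply,
    Unitary.conjStarAlgAut_apply, conj_diagonal_kronecker_conj_diagonal]
  rfl

lemma IsHermitian.cfc_kronecker_sub_kronecker_cfc (hX : X.IsHermitian) (hY : Y.IsHermitian)
    (f : ℝ → ℝ) :
    cfc f (X ⊗ₖ Y) - cfc f X ⊗ₖ cfc f Y
      = ((hX.eigenvectorUnitary : Matrix n n 𝕜) ⊗ₖ hY.eigenvectorUnitary)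
        * diagonal (RCLike.ofReal ∘ fun p : n × m => f (hX.eigenvalues p.1 * hY.eigenvalues p.2)
            - f (hX.eigenvalues p.1) * f (hY.eigenvalues p.2) : n × m → 𝕜)
        * star ((hX.eigenvectorUnitary : Matrix n n 𝕜) ⊗ₖ hY.eigenvectorUnitary) := by
  rw [hX.cfc_kronecker hY, hX.cfc_kronecker_cfc hY, ← sub_mul, ← mul_sub, diagonal_sub]
  congr 3
  funext p
  simp

end Hermitian

section PosSemidef

variable {X : Matrix n n 𝕜} {Y : Matrix m m 𝕜} {f : ℝ → ℝ}

lemma PosSemidef.cfc_kronecker_sub_kronecker_cfc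
    (hf : ∀ x y : ℝ, 0 ≤ x → 0 ≤ y → f x * f y ≤ f (x * y))
    (hX : X.PosSemidef) (hY : Y.PosSemidef) :
    (cfc f (X ⊗ₖ Y) - cfc f X ⊗ₖ cfc f Y).PosSemidef := by
  rw [hX.1.cfc_kronecker_sub_kronecker_cfc hY.1, star_eq_conjTranspose]
  refine PosSemidef.mul_mul_conjTranspose_same (posSemidef_diagonal_iff.mpr fun p => ?_) _
  exact RCLike.ofReal_nonneg.mpr
    (sub_nonneg.mpr (hf _ _ (hX.eigenvalues_nonneg p.1) (hY.eigenvalues_nonneg p.2)))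

lemma PosSemidef.cfc_kronecker (hf : ∀ x y : ℝ, 0 ≤ x → 0 ≤ y → f (x * y) = f x * f y)
    (hX : X.PosSemidef) (hY : Y.PosSemidef) :
    cfc f (X ⊗ₖ Y) = cfc f X ⊗ₖ cfc f Y := by
  rw [← sub_eq_zero, hX.1.cfc_kronecker_sub_kronecker_cfc hY.1]
  have hd : (fun p : n × m => f (hX.1.eigenvalues p.1 * hY.1.eigenvalues p.2)
      - f (hX.1.eigenvalues p.1) * f (hY.1.eigenvalues p.2)) = 0 := by
    funext p
    exact sub_eq_zero.mpr (hf _ _ (hX.eigenvalues_nonneg p.1) (hY.eigenvalues_nonneg p.2))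
  simp [hd]

lemma PosSemidef.cfc_sqrt_kronecker (hX : X.PosSemidef) (hY : Y.PosSemidef) :
    cfc Real.sqrt (X ⊗ₖ Y) = cfc Real.sqrt X ⊗ₖ cfc Real.sqrt Y :=
  hX.cfc_kronecker (fun _ _ hx _ => Real.sqrt_mul hx _) hY

end PosSemidef

end Matrix

theorem opConn_kron_le_general {k : ℕ} (f : ℝ → ℝ)
    (hf_super : ∀ x y : ℝ, 0 ≤ x → 0 ≤ y → f x * f y ≤ f (x * y))
    (A B C D : Matrix (Fin k) (Fin k) ℂ)
    (hA : A.PosDef) (hB : B.PosDef) (hC : C.PosDef) (hD : D.PosDef) :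
    (opConn f (A ⊗ₖ B) (C ⊗ₖ D)
      - (opConn f A C) ⊗ₖ (opConn f B D)).PosSemidef := by
  set S := cfc Real.sqrt A
  set T := cfc Real.sqrt B
  have hS : S.IsHermitian := IsSelfAdjoint.cfc
  have hT : T.IsHermitian := IsSelfAdjoint.cfc
  have hC' : (S⁻¹ * C * S⁻¹).PosSemidef := by
    simpa [hS.inv.eq] using hC.posSemidef.mul_mul_conjTranspose_same S⁻¹
  have hD' : (T⁻¹ * D * T⁻¹).PosSemidef := by
    simpa [hT.inv.eq] using hD.posSemidef.mul_mul_conjTranspose_same T⁻¹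
  have hlhs : opConn f (A ⊗ₖ B) (C ⊗ₖ D)
      = (S ⊗ₖ T) * cfc f ((S⁻¹ * C * S⁻¹) ⊗ₖ (T⁻¹ * D * T⁻¹)) * (S ⊗ₖ T) := by
    rw [opConn, hA.posSemidef.cfc_sqrt_kronecker hB.posSemidef, inv_kronecker,
      ← mul_kronecker_mul, ← mul_kronecker_mul]
  have hrhs : opConn f A C ⊗ₖ opConn f B D
      = (S ⊗ₖ T) * (cfc f (S⁻¹ * C * S⁻¹) ⊗ₖ cfc f (T⁻¹ * D * T⁻¹)) * (S ⊗ₖ T) := by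
    simp only [opConn, mul_kronecker_mul, S, T]
  rw [hlhs, hrhs, ← sub_mul, ← mul_sub]
  simpa [conjTranspose_kronecker, hS.eq, hT.eq] using
    (hC'.cfc_kronecker_sub_kronecker_cfc hf_super hD').mul_mul_conjTranspose_same (S ⊗ₖ T)

/-- Intermediate step in Lemma 4.3: for an operator monotone, super-multiplicative representing
function `f` and positive definite matrices `A, B, C, D`,
`(A σ_f C) ⊗ (B σ_f D) ≤ (A ⊗ B) σ_f (C ⊗ D)`. -/
theorem opConn_kron_le {k : ℕ} (f : ℝ → ℝ)
    (hf_cont : ContinuousOn f (Set.Ici 0))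
    (hf_nonneg : ∀ x : ℝ, 0 ≤ x → 0 ≤ f x)
    (hf_mono : ∀ (m : ℕ) (X Y : Matrix (Fin m) (Fin m) ℂ), X.PosSemidef → Y.PosSemidef →
      (Y - X).PosSemidef → (cfc f Y - cfc f X).PosSemidef)
    (hf_super : ∀ x y : ℝ, 0 ≤ x → 0 ≤ y → f x * f y ≤ f (x * y))
    (A B C D : Matrix (Fin k) (Fin k) ℂ)
    (hA : A.PosDef) (hB : B.PosDef) (hC : C.PosDef) (hD : D.PosDef) :
    (opConn f (A ⊗ₖ B) (C ⊗ₖ D)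
      - (opConn f A C) ⊗ₖ (opConn f B D)).PosSemidef :=
  opConn_kron_le_general f hf_super A B C D hA hB hC hD
end

section
/- Assume the field hypotheses (weights not needed) and suppose in addition that μ(Ω) = 1. Then (∫_Ω A_t² dμ(t)) ⊗_s I ≤ ((a² + b²)/(2ab)) · (∫_Ω A_t dμ(t))^{⊗2}, where I is the k×k identity matrix. (This is a Grüss type integral inequality for the tensor product of operators.) -/
open Matrix MeasureTheory
open scoped Kronecker ComplexOrder

attribute [local instance] Matrix.frobeniusNormedAddCommGroup Matrix.frobeniusNormedSpace

/-! Each `A t` commutes with the scalars `a` and `b`, so `(b - A t) * (A t - a)` is positive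
semidefinite, i.e. `A t ^ 2 ≤ (a + b) • A t - a * b`. Integrating this and `a ≤ A t ≤ b`
against the probability measure gives, for `B = ∫ A` and `S = ∫ A ^ 2`, that `B - a`,
`b - B` and `(a + b) • B - a * b - S` are positive semidefinite. With `c = (a² + b²) / (2ab)`,
`c • B ⊗ B - S ⊗ₛ 1 = (b / 2a) • (B - a) ⊗ (B - a) + (a / 2b) • (b - B) ⊗ (b - B)
  + ((a + b) • B - a * b - S) ⊗ₛ 1`,
and Kronecker products and symmetrized Kronecker products of positive semidefinite matrices are
positive semidefinite. -/

namespace Matrix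

variable {n : Type*} [Fintype n]

theorem isClosed_setOf_posSemidef : IsClosed {A : Matrix n n ℂ | A.PosSemidef} := by
  simp only [posSemidef_iff_dotProduct_mulVec, Set.ofPred_and, Set.ofPred_forall]
  refine .inter (isClosed_eq (by fun_prop) continuous_id) (isClosed_iInter fun x => ?_)
  exact isClosed_le continuous_const (by fun_prop)

theorem frobenius_norm_sq_eq_re_trace (A : Matrix n n ℂ) : ‖A‖ ^ 2 = (Aᴴ * A).trace.re := by
  rw [frobenius_norm_def, ← Real.rpow_natCast, ← Real.rpow_mul (by positivity)]
  simp only [trace, diag_apply, mul_apply, conjTranspose_apply, Complex.re_sum]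
  rw [Finset.sum_comm]
  norm_num [Complex.mul_re, Complex.sq_norm, Complex.normSq_apply]

variable [DecidableEq n]

theorem IsHermitian.frobenius_norm_sq_le {A : Matrix n n ℂ} (hA : A.IsHermitian) {c : ℝ}
    (h : ((c • 1 : Matrix n n ℂ) - A ^ 2).PosSemidef) : ‖A‖ ^ 2 ≤ Fintype.card n * c := by
  have htr := h.trace_nonneg
  rw [trace_sub, trace_smul, trace_one, Complex.le_def] at htr
  rw [frobenius_norm_sq_eq_re_trace, hA.eq, ← sq]
  simpa [sub_nonneg, mul_comm] using htr.1

open scoped MatrixOrder in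
theorem PosSemidef.sq_le_of_bounds {A : Matrix n n ℂ} {a b : ℝ} (hAa : (A - a • 1).PosSemidef)
    (hAb : ((b • 1 : Matrix n n ℂ) - A).PosSemidef) :
    ((a + b) • A - (a * b) • (1 : Matrix n n ℂ) - A ^ 2).PosSemidef := by
  have hcomm : Commute ((b • 1 : Matrix n n ℂ) - A) (A - a • 1) :=
    .sub_left (.sub_right ((Commute.one_left A).smul_left b) ((Commute.one_left _).smul_left b))
      (.sub_right (.refl A) ((Commute.one_right A).smul_right a))
  have hprod : ((b • 1 : Matrix n n ℂ) - A) * (A - a • 1)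
      = (a + b) • A - (a * b) • (1 : Matrix n n ℂ) - A ^ 2 := by
    simp only [sub_mul, mul_sub, smul_mul_assoc, mul_smul_comm, one_mul, mul_one, sq]
    module
  rw [← hprod, ← nonneg_iff_posSemidef]
  exact hcomm.mul_nonneg hAb.nonneg hAa.nonneg

theorem PosSemidef.norm_sq_le_of_bounds {A : Matrix n n ℂ} {a b : ℝ} (hab : 0 ≤ a + b)
    (hAa : (A - a • 1).PosSemidef) (hAb : ((b • 1 : Matrix n n ℂ) - A).PosSemidef) :
    ‖A‖ ^ 2 ≤ Fintype.card n * b ^ 2 := by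
  have hA : A.IsHermitian := by
    simpa using hAa.1.add (isHermitian_one.smul (IsSelfAdjoint.all a))
  refine hA.frobenius_norm_sq_le ?_
  have hsplit : (b ^ 2 • 1 : Matrix n n ℂ) - A ^ 2
      = ((a + b) • A - (a * b) • (1 : Matrix n n ℂ) - A ^ 2)
        + (a + b) • ((b • 1 : Matrix n n ℂ) - A) := by
    module
  rw [hsplit]
  exact (hAa.sq_le_of_bounds hAb).add (hAb.smul hab)

end Matrix

section Integral

variable {n Ω : Type*} [Fintype n] [MeasurableSpace Ω] {μ : Measure Ω}

/-- `Integrable` elaborates the topology of matrices as the product topology, against which the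
Frobenius `ContinuousENorm` is not found by instance search. -/
noncomputable instance : ContinuousENorm (Matrix n n ℂ) := SeminormedAddGroup.toContinuousENorm

theorem integral_posSemidef {f : Ω → Matrix n n ℂ} (hf : ∀ t, (f t).PosSemidef) :
    (∫ t, f t ∂μ).PosSemidef := by
  open scoped MatrixOrder in
  -- `ClosedIciTopology` for the Loewner order and the Frobenius topology, given by hand:
  -- `{X | A ≤ X}` is a translate of the closed PSD cone.
  refine nonneg_iff_posSemidef.mp
    (@integral_nonneg _ _ _ _ _ _ _ _ _ ⟨fun A => ?_⟩ _ fun t => (hf t).nonneg)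
  exact isClosed_setOf_posSemidef.preimage (continuous_sub_right A)

theorem integrable_sq_of_norm_le [DecidableEq n] [IsFiniteMeasure μ] {f : Ω → Matrix n n ℂ}
    (hf : AEStronglyMeasurable f μ) {C : ℝ} (hC : ∀ t, ‖f t‖ ≤ C) :
    Integrable (fun t => f t ^ 2) μ := by
  refine .of_bound (hf.pow 2) (C ^ 2) (ae_of_all _ fun t => ?_)
  calc ‖f t ^ 2‖ ≤ ‖f t‖ * ‖f t‖ := by rw [sq]; exact frobenius_norm_mul _ _
    _ ≤ C ^ 2 := by rw [sq]; exact mul_self_le_mul_self (norm_nonneg _) (hC t)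

variable [IsProbabilityMeasure μ] {f : Ω → Matrix n n ℂ}

theorem posSemidef_integral_sub_of_forall (hf : Integrable f μ) (C : Matrix n n ℂ)
    (h : ∀ t, (f t - C).PosSemidef) :
    ((∫ t, f t ∂μ) - C).PosSemidef := by
  have := integral_posSemidef (μ := μ) h
  rwa [integral_sub hf (integrable_const C), integral_const, probReal_univ, one_smul] at this

theorem posSemidef_sub_integral_of_forall (hf : Integrable f μ) (C : Matrix n n ℂ)
    (h : ∀ t, (C - f t).PosSemidef) :
    (C - ∫ t, f t ∂μ).PosSemidef := by
  have := integral_posSemidef (μ := μ) h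
  rwa [integral_sub (integrable_const C) hf, integral_const, probReal_univ, one_smul] at this

end Integral

section Kronecker

variable {k : ℕ}

theorem Matrix.PosSemidef.symKron {X Y : Matrix (Fin k) (Fin k) ℂ} (hX : X.PosSemidef)
    (hY : Y.PosSemidef) : (symKron X Y).PosSemidef :=
  ((hX.kronecker hY).add (hY.kronecker hX)).smul (div_nonneg zero_le_one zero_le_two)

theorem smul_kronecker_self_sub_symKron_eq {a b : ℝ} (ha : a ≠ 0) (hb : b ≠ 0)
    (B S : Matrix (Fin k) (Fin k) ℂ) :
    ((a ^ 2 + b ^ 2) / (2 * a * b)) • (B ⊗ₖ B) - symKron S 1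
      = (b / (2 * a)) • ((B - a • 1) ⊗ₖ (B - a • 1))
        + (a / (2 * b)) • (((b • 1 : Matrix (Fin k) (Fin k) ℂ) - B) ⊗ₖ (b • 1 - B))
        + symKron ((a + b) • B - (a * b) • 1 - S) 1 := by
  ext ⟨i, j⟩ ⟨p, q⟩
  simp only [symKron, kroneckerMap_apply, Matrix.add_apply, Matrix.sub_apply, Matrix.smul_apply,
    smul_eq_mul, Complex.real_smul]
  push_cast
  field_simp
  ring

end Kronecker

theorem gruss_integral_tensor_general {k : ℕ} {Ω : Type*} [MeasurableSpace Ω]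
    (μ : Measure Ω) [IsProbabilityMeasure μ] (a b : ℝ) (ha : 0 < a) (hab : a ≤ b)
    (A : Ω → Matrix (Fin k) (Fin k) ℂ) (hAmeas : AEStronglyMeasurable A μ)
    (hAa : ∀ t, (A t - a • 1).PosSemidef)
    (hAb : ∀ t, ((b • 1 : Matrix (Fin k) (Fin k) ℂ) - A t).PosSemidef) :
    (((a ^ 2 + b ^ 2) / (2 * a * b)) • ((∫ t, A t ∂μ) ⊗ₖ (∫ t, A t ∂μ))
      - symKron (∫ t, A t ^ 2 ∂μ) 1).PosSemidef := by
  have hb : 0 < b := ha.trans_le hab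
  have hbound : ∀ t, ‖A t‖ ≤ √(Fintype.card (Fin k) * b ^ 2) := fun t =>
    (le_abs_self _).trans <| Real.abs_le_sqrt <|
      (hAa t).norm_sq_le_of_bounds (by linarith) (hAb t)
  have hInt : Integrable A μ := .of_bound hAmeas _ (ae_of_all _ hbound)
  have hInt2 := integrable_sq_of_norm_le hAmeas hbound
  have hBa := posSemidef_integral_sub_of_forall hInt _ hAa
  have hBb := posSemidef_sub_integral_of_forall hInt _ hAb
  have hS : ((a + b) • (∫ t, A t ∂μ) - (a * b) • 1 - ∫ t, A t ^ 2 ∂μ).PosSemidef := by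
    have := posSemidef_integral_sub_of_forall (f := fun t => (a + b) • A t - A t ^ 2)
      ((hInt.smul (a + b)).sub hInt2) ((a * b) • 1)
      fun t => by simpa only [sub_right_comm] using (hAa t).sq_le_of_bounds (hAb t)
    rwa [integral_sub (f := fun t => (a + b) • A t) (hInt.smul (a + b)) hInt2, integral_smul,
      sub_right_comm] at this
  rw [smul_kronecker_self_sub_symKron_eq ha.ne' hb.ne']
  exact (((hBa.kronecker hBa).smul (by positivity)).add
    ((hBb.kronecker hBb).smul (by positivity))).add (hS.symKron .one)

/-- Inequality (5.3): Grüss type integral inequality for the tensor product. If `μ(Ω) = 1`,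
then `(∫ A_t² dμ) ⊗ₛ I ≤ ((a²+b²)/(2ab)) (∫ A_t dμ)^{⊗2}`. -/
theorem gruss_integral_tensor {k : ℕ} {Ω : Type*} [MeasurableSpace Ω]
    (μ : Measure Ω) [IsProbabilityMeasure μ] (a b : ℝ) (ha : 0 < a) (hab : a ≤ b)
    (A : Ω → Matrix (Fin k) (Fin k) ℂ) (hAmeas : AEStronglyMeasurable A μ)
    (hAherm : ∀ t, (A t).IsHermitian)
    (hAa : ∀ t, (A t - a • 1).PosSemidef)
    (hAb : ∀ t, ((b • 1 : Matrix (Fin k) (Fin k) ℂ) - A t).PosSemidef) :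
    (((a ^ 2 + b ^ 2) / (2 * a * b)) • ((∫ t, A t ∂μ) ⊗ₖ (∫ t, A t ∂μ))
      - symKron (∫ t, A t ^ 2 ∂μ) 1).PosSemidef :=
  gruss_integral_tensor_general μ a b ha hab A hAmeas hAa hAb
end

section
/- Assume the field hypotheses (weights not needed) and suppose that 1 ∈ [a, b]. Then for any real number λ and any α ∈ [−1, 1], (∫_Ω A_t^{λ+α} dμ(t)) ⊗_s (∫_Ω A_t^{λ−α} dμ(t)) ≤ ((a² + b²)/(2ab)) · (∫_Ω A_t^{λ} dμ(t))^{⊗2}, where real powers of the positive definite matrices A_t are defined by the functional calculus. -/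
open Matrix MeasureTheory
open scoped Kronecker ComplexOrder

attribute [local instance] Matrix.frobeniusNormedAddCommGroup Matrix.frobeniusNormedSpace

/-!
Both sides are bilinear in the integrals, so the difference is the double integral over `(t, s)`
of `K • A_t^l ⊗ A_s^l - ½ (A_t^(l+α) ⊗ A_s^(l-α) + A_t^(l-α) ⊗ A_s^(l+α))`, `K = (a²+b²)/(2ab)`.
For fixed `t, s` these Kronecker products are diagonal in the product of the eigenbases of `A_t`
and `A_s`, so the integrand is positive semidefinite as soon as, for eigenvalues `x, y ∈ [a, b]`,
`(x^(l+α) y^(l-α) + x^(l-α) y^(l+α)) / 2 ≤ K x^l y^l`. Dividing by `x^l y^l` this is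
`u + u⁻¹ ≤ b/a + a/b` for `u = (x/y)^α`, which holds because `|α| ≤ 1` keeps `u` in `[a/b, b/a]`.
Integrals of positive semidefinite matrices are positive semidefinite.
-/

open Set

theorem Real.rpow_mem_Icc_inv_self {c t α : ℝ} (hc : 0 < c) (ht : t ∈ Icc c⁻¹ c)
    (hα : α ∈ Icc (-1 : ℝ) 1) : t ^ α ∈ Icc c⁻¹ c := by
  have ht₀ : 0 < t := (inv_pos.2 hc).trans_le ht.1
  rcases le_total 1 t with h | h
  · refine ⟨?_, ?_⟩
    · calc c⁻¹ ≤ t⁻¹ := inv_anti₀ ht₀ ht.2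
        _ = t ^ (-1 : ℝ) := (Real.rpow_neg_one t).symm
        _ ≤ t ^ α := Real.rpow_le_rpow_of_exponent_le h hα.1
    · calc t ^ α ≤ t ^ (1 : ℝ) := Real.rpow_le_rpow_of_exponent_le h hα.2
        _ = t := Real.rpow_one t
        _ ≤ c := ht.2
  · refine ⟨?_, ?_⟩
    · calc c⁻¹ ≤ t := ht.1
        _ = t ^ (1 : ℝ) := (Real.rpow_one t).symm
        _ ≤ t ^ α := Real.rpow_le_rpow_of_exponent_ge ht₀ h hα.2
    · calc t ^ α ≤ t ^ (-1 : ℝ) := Real.rpow_le_rpow_of_exponent_ge ht₀ h hα.1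
        _ = t⁻¹ := Real.rpow_neg_one t
        _ ≤ c := inv_le_of_inv_le₀ hc ht.1

theorem add_inv_le_add_inv_of_mem_Icc {c u : ℝ} (hc : 0 < c) (hu : u ∈ Icc c⁻¹ c) :
    u + u⁻¹ ≤ c + c⁻¹ := by
  have hu₀ : 0 < u := (inv_pos.2 hc).trans_le hu.1
  have : c + c⁻¹ - (u + u⁻¹) = (c - u) * (u - c⁻¹) / u := by field_simp; ring
  rw [← sub_nonneg, this]
  exact div_nonneg (mul_nonneg (sub_nonneg.2 hu.2) (sub_nonneg.2 hu.1)) hu₀.le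

theorem Real.rpow_add_mul_rpow_sub_add_le {a b x y l α : ℝ} (ha : 0 < a) (hx : x ∈ Icc a b)
    (hy : y ∈ Icc a b) (hα : α ∈ Icc (-1 : ℝ) 1) :
    (x ^ (l + α) * y ^ (l - α) + x ^ (l - α) * y ^ (l + α)) / 2 ≤
      (a ^ 2 + b ^ 2) / (2 * a * b) * (x ^ l * y ^ l) := by
  have hb : 0 < b := ha.trans_le (hx.1.trans hx.2)
  have hx₀ : 0 < x := ha.trans_le hx.1
  have hy₀ : 0 < y := ha.trans_le hy.1
  have hxy : x / y ∈ Icc (b / a)⁻¹ (b / a) := by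
    rw [inv_div]
    constructor
    · rw [div_le_div_iff₀ hb hy₀]; nlinarith [hx.1, hy.2]
    · rw [div_le_div_iff₀ hy₀ ha]; nlinarith [hx.2, hy.1]
  have hu := add_inv_le_add_inv_of_mem_Icc (div_pos hb ha)
    (rpow_mem_Icc_inv_self (div_pos hb ha) hxy hα)
  have e₁ : x ^ (l + α) * y ^ (l - α) = x ^ l * y ^ l * (x / y) ^ α := by
    rw [Real.rpow_add hx₀, Real.rpow_sub hy₀, Real.div_rpow hx₀.le hy₀.le]
    field_simp
  have e₂ : x ^ (l - α) * y ^ (l + α) = x ^ l * y ^ l * ((x / y) ^ α)⁻¹ := by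
    rw [Real.rpow_sub hx₀, Real.rpow_add hy₀, Real.div_rpow hx₀.le hy₀.le]
    field_simp
  have hK : (a ^ 2 + b ^ 2) / (2 * a * b) = (b / a + (b / a)⁻¹) / 2 := by
    field_simp; ring
  calc (x ^ (l + α) * y ^ (l - α) + x ^ (l - α) * y ^ (l + α)) / 2
      = x ^ l * y ^ l * ((x / y) ^ α + ((x / y) ^ α)⁻¹) / 2 := by rw [e₁, e₂, mul_add]
    _ ≤ x ^ l * y ^ l * (b / a + (b / a)⁻¹) / 2 := by gcongr
    _ = (a ^ 2 + b ^ 2) / (2 * a * b) * (x ^ l * y ^ l) := by rw [hK]; ring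

namespace Matrix.IsHermitian

variable {𝕜 m n : Type*} [RCLike 𝕜] [Fintype m] [DecidableEq m] [Fintype n] [DecidableEq n]
  {P : Matrix m m 𝕜} {Q : Matrix n n 𝕜}

open scoped MatrixOrder in
theorem spectrum_subset_Icc (hP : P.IsHermitian) {a b : ℝ} (ha : (P - a • 1).PosSemidef)
    (hb : ((b • 1 : Matrix m m 𝕜) - P).PosSemidef) : spectrum ℝ P ⊆ Icc a b := by
  rw [← nonneg_iff_posSemidef, sub_nonneg, ← Algebra.algebraMap_eq_smul_one] at ha hb
  exact fun x hx => ⟨(algebraMap_le_iff_le_spectrum hP.isSelfAdjoint).1 ha x hx,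
    (le_algebraMap_iff_spectrum_le hP.isSelfAdjoint).1 hb x hx⟩

/-- The joint functional calculus of the commuting pair `P ⊗ 1`, `1 ⊗ Q`. -/
noncomputable def kroneckerCfc (hP : P.IsHermitian) (hQ : Q.IsHermitian) :
    (ℝ → ℝ → ℝ) →ₗ[ℝ] Matrix (m × n) (m × n) 𝕜 where
  toFun h := ((hP.eigenvectorUnitary : Matrix m m 𝕜) ⊗ₖ (hQ.eigenvectorUnitary : Matrix n n 𝕜)) *
      diagonal (fun p => (h (hP.eigenvalues p.1) (hQ.eigenvalues p.2) : 𝕜)) *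
      star ((hP.eigenvectorUnitary : Matrix m m 𝕜) ⊗ₖ (hQ.eigenvectorUnitary : Matrix n n 𝕜))
  map_add' h h' := by
    simp only [Pi.add_apply, RCLike.ofReal_add, ← diagonal_add, mul_add, add_mul]
  map_smul' c h := by
    have hd : (fun p : m × n => ((c * h (hP.eigenvalues p.1) (hQ.eigenvalues p.2) : ℝ) : 𝕜)) =
        c • fun p => (h (hP.eigenvalues p.1) (hQ.eigenvalues p.2) : 𝕜) := by
      ext; simp [RCLike.real_smul_eq_coe_mul]
    simp only [Pi.smul_apply, smul_eq_mul, RingHom.id_apply, hd, diagonal_smul, Matrix.mul_smul,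
      Matrix.smul_mul]

theorem cfc_kronecker_cfc_s18 (hP : P.IsHermitian) (hQ : Q.IsHermitian) (f g : ℝ → ℝ) :
    cfc f P ⊗ₖ cfc g Q = hP.kroneckerCfc hQ (fun x y => f x * g y) := by
  rw [hP.cfc_eq, hQ.cfc_eq, IsHermitian.cfc, IsHermitian.cfc, Unitary.conjStarAlgAut_apply,
    Unitary.conjStarAlgAut_apply, mul_kronecker_mul, mul_kronecker_mul,
    diagonal_kronecker_diagonal]
  simp [kroneckerCfc, star_eq_conjTranspose, conjTranspose_kronecker]

theorem posSemidef_kroneckerCfc (hP : P.IsHermitian) (hQ : Q.IsHermitian) {h : ℝ → ℝ → ℝ}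
    (hh : ∀ i j, 0 ≤ h (hP.eigenvalues i) (hQ.eigenvalues j)) :
    (hP.kroneckerCfc hQ h).PosSemidef := by
  refine (posSemidef_diagonal_iff.2 fun p => ?_).mul_mul_conjTranspose_same _
  exact_mod_cast hh p.1 p.2

theorem posSemidef_kantorovich_kronecker_rpow (hP : P.IsHermitian) (hQ : Q.IsHermitian)
    {a b l α : ℝ} (ha : 0 < a) (hPab : spectrum ℝ P ⊆ Icc a b) (hQab : spectrum ℝ Q ⊆ Icc a b)
    (hα : α ∈ Icc (-1 : ℝ) 1) :
    (((a ^ 2 + b ^ 2) / (2 * a * b)) •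
        (cfc (fun x : ℝ => x ^ l) P ⊗ₖ cfc (fun x : ℝ => x ^ l) Q) -
      ((1 : 𝕜) / 2) • (cfc (fun x : ℝ => x ^ (l + α)) P ⊗ₖ cfc (fun x : ℝ => x ^ (l - α)) Q +
        cfc (fun x : ℝ => x ^ (l - α)) P ⊗ₖ cfc (fun x : ℝ => x ^ (l + α)) Q)).PosSemidef := by
  have half : ((1 : 𝕜) / 2) = ((1 / 2 : ℝ) : 𝕜) := by push_cast; rfl
  rw [half, ← RCLike.real_smul_eq_coe_smul, cfc_kronecker_cfc_s18 hP hQ, cfc_kronecker_cfc_s18 hP hQ,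
    cfc_kronecker_cfc_s18 hP hQ, ← map_add, ← map_smul, ← map_smul, ← map_sub]
  refine posSemidef_kroneckerCfc hP hQ fun i j => ?_
  have := Real.rpow_add_mul_rpow_sub_add_le (l := l) ha (hPab (hP.eigenvalues_mem_spectrum_real i))
    (hQab (hQ.eigenvalues_mem_spectrum_real j)) hα
  simp only [Pi.sub_apply, Pi.smul_apply, Pi.add_apply, smul_eq_mul]
  linarith

end Matrix.IsHermitian

open scoped Matrix.Norms.L2Operator in
theorem Matrix.continuous_cfc_realPart {n : Type*} [Fintype n] [DecidableEq n] {f : ℝ → ℝ}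
    (hf : Continuous f) : Continuous fun M : Matrix n n ℂ => cfc f (realPart M : Matrix n n ℂ) := by
  refine Continuous.cfc_of_mem_nhdsSet f (s := univ) (by simp) ?_ (fun M => (realPart M).2)
    hf.continuousOn
  simp only [realPart_apply_coe]
  fun_prop

open scoped MatrixOrder Matrix.Norms.L2Operator in
theorem Matrix.isCompact_setOf_posSemidef_sub_smul_one {n : Type*} [Fintype n] [DecidableEq n]
    (a b : ℝ) : IsCompact
      {M : Matrix n n ℂ | (M - a • 1).PosSemidef ∧ ((b • 1 : Matrix n n ℂ) - M).PosSemidef} := by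
  have hIcc :
      {M : Matrix n n ℂ | (M - a • 1).PosSemidef ∧ ((b • 1 : Matrix n n ℂ) - M).PosSemidef} =
        Icc (algebraMap ℝ _ a) (algebraMap ℝ _ b) := by
    ext M
    simp [Algebra.algebraMap_eq_smul_one, le_iff]
  rw [hIcc]
  refine Metric.isCompact_of_isClosed_isBounded isClosed_Icc
    ((Metric.isBounded_closedBall (x := algebraMap ℝ _ a)
      (r := ‖algebraMap ℝ (Matrix n n ℂ) (b - a)‖)).subset fun M hM => ?_)
  rw [Metric.mem_closedBall, dist_eq_norm, map_sub]
  exact CStarAlgebra.norm_le_norm_of_nonneg_of_le (sub_nonneg.2 hM.1) (sub_le_sub_right hM.2 _)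

/-- The Frobenius norm induces the product topology of `Matrix` only up to unfolding, so this is
not found by instance search; it is what `Integrable` needs for matrix-valued functions. -/
noncomputable abbrev Matrix.frobeniusContinuousENorm {m n : Type*} [Fintype m] [Fintype n] :
    ContinuousENorm (Matrix m n ℂ) :=
  SeminormedAddGroup.toContinuousENorm

attribute [local instance] Matrix.frobeniusContinuousENorm

section Integral

variable {Ω : Type*} [MeasurableSpace Ω] {μ : Measure Ω}

open scoped MatrixOrder in
theorem Matrix.posSemidef_integral {n : Type*} [Fintype n] {F : Ω → Matrix n n ℂ}
    (hF : ∀ t, (F t).PosSemidef) : (∫ t, F t ∂μ).PosSemidef := by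
  classical
  -- The closedness of the positive semidefinite cone comes from the C⋆-algebra structure of the
  -- `L2` operator norm, whose topology agrees with that of the Frobenius norm only up to unfolding.
  have hclosed : ClosedIciTopology (Matrix n n ℂ) := by
    open scoped Matrix.Norms.L2Operator in infer_instance
  exact nonneg_iff_posSemidef.1
    (@integral_nonneg _ _ _ _ _ _ _ _ _ hclosed _ fun t => nonneg_iff_posSemidef.2 (hF t))

theorem Matrix.integrable_cfc [IsFiniteMeasure μ] {n : Type*} [Fintype n] [DecidableEq n]
    {A : Ω → Matrix n n ℂ} (hA : AEStronglyMeasurable A μ) (hAherm : ∀ t, (A t).IsHermitian)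
    {a b : ℝ} (hab : a ≤ b) (hAa : ∀ t, (A t - a • 1).PosSemidef)
    (hAb : ∀ t, ((b • 1 : Matrix n n ℂ) - A t).PosSemidef) {f : ℝ → ℝ}
    (hf : ContinuousOn f (Icc a b)) : Integrable (fun t => cfc f (A t)) μ := by
  set g : ℝ → ℝ := fun x => f (projIcc a b hab x)
  have hg : Continuous g := hf.comp_continuous (continuous_subtype_val.comp continuous_projIcc)
    fun x => (projIcc a b hab x).2
  have hfg : ∀ t, cfc f (A t) = cfc g (realPart (A t) : Matrix n n ℂ) := fun t => by
    rw [(hAherm t).isSelfAdjoint.coe_realPart]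
    exact cfc_congr fun x hx => by
      simp [g, projIcc_of_mem hab ((hAherm t).spectrum_subset_Icc (hAa t) (hAb t) hx)]
  obtain ⟨C, hC⟩ := (isCompact_setOf_posSemidef_sub_smul_one a b).exists_bound_of_continuousOn
    (continuous_cfc_realPart (n := n) hg).continuousOn
  simp_rw [hfg]
  exact Integrable.of_bound ((continuous_cfc_realPart hg).comp_aestronglyMeasurable hA) C
    (ae_of_all _ fun t => hC _ ⟨hAa t, hAb t⟩)

variable {l m n p : Type*} [Fintype l] [Fintype m] [Fintype n] [Fintype p]

theorem Matrix.integral_kronecker_const {f : Ω → Matrix l m ℂ} (hf : Integrable f μ)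
    (C : Matrix n p ℂ) : ∫ t, f t ⊗ₖ C ∂μ = (∫ t, f t ∂μ) ⊗ₖ C :=
  (LinearMap.toContinuousLinearMap ((kroneckerBilinear (R := ℂ)).flip C)).integral_comp_comm hf

theorem Matrix.integral_const_kronecker {f : Ω → Matrix n p ℂ} (hf : Integrable f μ)
    (C : Matrix l m ℂ) : ∫ t, C ⊗ₖ f t ∂μ = C ⊗ₖ ∫ t, f t ∂μ :=
  (LinearMap.toContinuousLinearMap (kroneckerBilinear (R := ℂ) C)).integral_comp_comm hf

theorem MeasureTheory.Integrable.kronecker_const {f : Ω → Matrix l m ℂ} (hf : Integrable f μ)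
    (C : Matrix n p ℂ) : Integrable (fun t => f t ⊗ₖ C) μ :=
  (LinearMap.toContinuousLinearMap ((kroneckerBilinear (R := ℂ)).flip C)).integrable_comp hf

theorem MeasureTheory.Integrable.const_kronecker {f : Ω → Matrix n p ℂ} (hf : Integrable f μ)
    (C : Matrix l m ℂ) : Integrable (fun t => C ⊗ₖ f t) μ :=
  (LinearMap.toContinuousLinearMap (kroneckerBilinear (R := ℂ) C)).integrable_comp hf

theorem integral_smul_sub_smul_add {E : Type*} [NormedAddCommGroup E] [NormedSpace ℂ E]
    (K : ℝ) (c : ℂ) {f g h : Ω → E} (hf : Integrable f μ) (hg : Integrable g μ)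
    (hh : Integrable h μ) :
    ∫ t, (K • f t - c • (g t + h t)) ∂μ =
      K • ∫ t, f t ∂μ - c • (∫ t, g t ∂μ + ∫ t, h t ∂μ) := by
  rw [integral_sub (f := fun t => K • f t) (g := fun t => c • (g t + h t)) (hf.smul K)
    ((hg.add hh).smul c), integral_smul, integral_smul, integral_add hg hh]

theorem smul_kronecker_sub_symKron_eq_integral_integral {k : ℕ} (K : ℝ)
    {f g h : Ω → Matrix (Fin k) (Fin k) ℂ} (hf : Integrable f μ) (hg : Integrable g μ)
    (hh : Integrable h μ) :
    K • ((∫ t, f t ∂μ) ⊗ₖ ∫ t, f t ∂μ) - symKron (∫ t, g t ∂μ) (∫ t, h t ∂μ) =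
      ∫ t, ∫ s, (K • (f t ⊗ₖ f s) - ((1 : ℂ) / 2) • (g t ⊗ₖ h s + h t ⊗ₖ g s)) ∂μ ∂μ := by
  have inner : ∀ t, ∫ s, (K • (f t ⊗ₖ f s) - ((1 : ℂ) / 2) • (g t ⊗ₖ h s + h t ⊗ₖ g s)) ∂μ =
      K • (f t ⊗ₖ ∫ s, f s ∂μ) -
        ((1 : ℂ) / 2) • (g t ⊗ₖ ∫ s, h s ∂μ + h t ⊗ₖ ∫ s, g s ∂μ) := fun t => by
    rw [integral_smul_sub_smul_add _ _ (hf.const_kronecker _) (hh.const_kronecker _)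
      (hg.const_kronecker _), integral_const_kronecker hf, integral_const_kronecker hh,
      integral_const_kronecker hg]
  simp_rw [inner]
  rw [integral_smul_sub_smul_add _ _ (hf.kronecker_const _) (hg.kronecker_const _)
    (hh.kronecker_const _), integral_kronecker_const hf, integral_kronecker_const hg,
    integral_kronecker_const hh, symKron]

end Integral

theorem kantorovich_integral_tensor_rpow_shift_general {k : ℕ} {Ω : Type*} [MeasurableSpace Ω]
    (μ : Measure Ω) [IsFiniteMeasure μ] (a b : ℝ) (ha : 0 < a) (hab : a ≤ b)
    (A : Ω → Matrix (Fin k) (Fin k) ℂ) (hAmeas : AEStronglyMeasurable A μ)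
    (hAherm : ∀ t, (A t).IsHermitian)
    (hAa : ∀ t, (A t - a • 1).PosSemidef)
    (hAb : ∀ t, ((b • 1 : Matrix (Fin k) (Fin k) ℂ) - A t).PosSemidef)
    (l α : ℝ) (hα : α ∈ Set.Icc (-1 : ℝ) 1) :
    (((a ^ 2 + b ^ 2) / (2 * a * b)) •
        ((∫ t, cfc (fun x : ℝ => x ^ l) (A t) ∂μ) ⊗ₖ (∫ t, cfc (fun x : ℝ => x ^ l) (A t) ∂μ))
      - symKron (∫ t, cfc (fun x : ℝ => x ^ (l + α)) (A t) ∂μ)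
          (∫ t, cfc (fun x : ℝ => x ^ (l - α)) (A t) ∂μ)).PosSemidef := by
  have hspec : ∀ t, spectrum ℝ (A t) ⊆ Icc a b := fun t =>
    (hAherm t).spectrum_subset_Icc (hAa t) (hAb t)
  have hint : ∀ r : ℝ, Integrable (fun t => cfc (fun x : ℝ => x ^ r) (A t)) μ := fun r =>
    integrable_cfc hAmeas hAherm hab hAa hAb
      (continuousOn_id.rpow_const fun x hx => Or.inl (ha.trans_le hx.1).ne')
  rw [smul_kronecker_sub_symKron_eq_integral_integral _ (hint l) (hint (l + α)) (hint (l - α))]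
  exact posSemidef_integral fun t => posSemidef_integral fun s =>
    (hAherm t).posSemidef_kantorovich_kronecker_rpow (hAherm s) ha (hspec t) (hspec s) hα

/-- Inequality (5.5): if `1 ∈ [a,b]`, then for any real `λ` and `α ∈ [-1,1]`,
`(∫ A_t^{λ+α} dμ) ⊗ₛ (∫ A_t^{λ-α} dμ) ≤ ((a²+b²)/(2ab)) (∫ A_t^{λ} dμ)^{⊗2}`. -/
theorem kantorovich_integral_tensor_rpow_shift {k : ℕ} {Ω : Type*} [MeasurableSpace Ω]
    (μ : Measure Ω) [IsFiniteMeasure μ] (a b : ℝ) (ha : 0 < a) (hab : a ≤ b)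
    (h1 : 1 ∈ Set.Icc a b)
    (A : Ω → Matrix (Fin k) (Fin k) ℂ) (hAmeas : AEStronglyMeasurable A μ)
    (hAherm : ∀ t, (A t).IsHermitian)
    (hAa : ∀ t, (A t - a • 1).PosSemidef)
    (hAb : ∀ t, ((b • 1 : Matrix (Fin k) (Fin k) ℂ) - A t).PosSemidef)
    (l α : ℝ) (hα : α ∈ Set.Icc (-1 : ℝ) 1) :
    (((a ^ 2 + b ^ 2) / (2 * a * b)) •
        ((∫ t, cfc (fun x : ℝ => x ^ l) (A t) ∂μ) ⊗ₖ (∫ t, cfc (fun x : ℝ => x ^ l) (A t) ∂μ))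
      - symKron (∫ t, cfc (fun x : ℝ => x ^ (l + α)) (A t) ∂μ)
          (∫ t, cfc (fun x : ℝ => x ^ (l - α)) (A t) ∂μ)).PosSemidef :=
  kantorovich_integral_tensor_rpow_shift_general μ a b ha hab A hAmeas hAherm hAa hAb l α hα
end

section
/- Let a₁, …, aₙ and w₁, …, wₙ be real numbers such that 0 < a ≤ aᵢ ≤ b and wᵢ ≥ 0 for all 1 ≤ i ≤ n. Then (∑_{i=1}^n wᵢ aᵢ)·(∑_{i=1}^n wᵢ/aᵢ) ≤ ((a + b)²/(4ab))·(∑_{i=1}^n wᵢ)². (This is the classical Kantorovich inequality, a reverse weighted arithmetic–harmonic mean inequality.) -/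
/-! Each `t ∈ [a, b]` satisfies `(t - a)(b - t) ≥ 0`, i.e. `1/t ≤ (a + b - t)/(ab)`. Summing with
the weights bounds the harmonic sum `T = ∑ wᵢ/xᵢ` linearly by the arithmetic sum `S = ∑ wᵢ xᵢ`:
`ab T ≤ (a + b) W - S` with `W = ∑ wᵢ`, and AM-GM gives `S ((a + b) W - S) ≤ (a + b)² W² / 4`. -/

open Finset

lemma inv_le_add_sub_div_mul {a b t : ℝ} (ha : 0 < a) (hat : a ≤ t) (htb : t ≤ b) :
    t⁻¹ ≤ (a + b - t) / (a * b) := by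
  have ht : 0 < t := ha.trans_le hat
  have hb : 0 < b := ht.trans_le htb
  rw [inv_eq_one_div, div_le_div_iff₀ ht (mul_pos ha hb)]
  nlinarith [mul_nonneg (sub_nonneg.2 hat) (sub_nonneg.2 htb)]

lemma sum_div_le_of_mem_Icc {ι : Type*} (s : Finset ι) {a b : ℝ} {x w : ι → ℝ} (ha : 0 < a)
    (hx : ∀ i ∈ s, x i ∈ Set.Icc a b) (hw : ∀ i ∈ s, 0 ≤ w i) :
    ∑ i ∈ s, w i / x i ≤ ((a + b) * ∑ i ∈ s, w i - ∑ i ∈ s, w i * x i) / (a * b) := by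
  calc ∑ i ∈ s, w i / x i
      ≤ ∑ i ∈ s, ((a + b) * w i - w i * x i) / (a * b) := by
        refine sum_le_sum fun i hi => ?_
        have key := mul_le_mul_of_nonneg_left
          (inv_le_add_sub_div_mul ha (hx i hi).1 (hx i hi).2) (hw i hi)
        calc w i / x i = w i * (x i)⁻¹ := div_eq_mul_inv _ _
          _ ≤ w i * ((a + b - x i) / (a * b)) := key
          _ = ((a + b) * w i - w i * x i) / (a * b) := by ring
    _ = ((a + b) * ∑ i ∈ s, w i - ∑ i ∈ s, w i * x i) / (a * b) := by
        rw [← sum_div, sum_sub_distrib, mul_sum]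

theorem kantorovich_inequality {ι : Type*} (s : Finset ι) {a b : ℝ} {x w : ι → ℝ} (ha : 0 < a)
    (hb : 0 < b) (hx : ∀ i ∈ s, x i ∈ Set.Icc a b) (hw : ∀ i ∈ s, 0 ≤ w i) :
    (∑ i ∈ s, w i * x i) * (∑ i ∈ s, w i / x i) ≤
      (a + b) ^ 2 / (4 * a * b) * (∑ i ∈ s, w i) ^ 2 := by
  have hS : 0 ≤ ∑ i ∈ s, w i * x i :=
    sum_nonneg fun i hi => mul_nonneg (hw i hi) (ha.le.trans (hx i hi).1)
  have hT := sum_div_le_of_mem_Icc s ha hx hw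
  set S := ∑ i ∈ s, w i * x i
  set W := ∑ i ∈ s, w i
  have amgm : 4 * S * ((a + b) * W - S) ≤ ((a + b) * W) ^ 2 := by
    simpa using four_mul_le_sq_add S ((a + b) * W - S)
  calc S * ∑ i ∈ s, w i / x i ≤ S * ((a + b) * W - S) / (a * b) := by
        rw [mul_div_assoc]; gcongr
    _ ≤ ((a + b) * W) ^ 2 / 4 / (a * b) := by gcongr; linarith
    _ = (a + b) ^ 2 / (4 * a * b) * W ^ 2 := by field_simp

/-- The classical Kantorovich inequality: for `0 < a ≤ b`, `x i ∈ [a, b]` and weights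
`w i ≥ 0`, `(∑ wᵢ xᵢ)(∑ wᵢ/xᵢ) ≤ ((a+b)²/(4ab)) (∑ wᵢ)²`. -/
theorem classical_kantorovich (n : ℕ) (a b : ℝ) (ha : 0 < a) (hab : a ≤ b)
    (x w : Fin n → ℝ) (hx : ∀ i, x i ∈ Set.Icc a b) (hw : ∀ i, 0 ≤ w i) :
    (∑ i, w i * x i) * (∑ i, w i / x i) ≤ (a + b) ^ 2 / (4 * a * b) * (∑ i, w i) ^ 2 :=
  kantorovich_inequality univ ha (ha.trans_le hab) (fun i _ => hx i) (fun i _ => hw i)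
end
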